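/- Let f : (0,∞) → ℝ be differentiable, let y ∈ ℝ², and let x ∈ ℝ² with x ≠ y. Then the traction at x of the matrix field z ↦ f(|z−y|) I equals (f'(|x−y|)/|x−y|) · U_1(x,y). -/

import Mathlib

open Real Filter MeasureTheory

/-- Euclidean norm on ℝ² (represented as `Fin 2 → ℝ`). -/
noncomputable def nrm2 (z : Fin 2 → ℝ) : ℝ := Real.sqrt (z 0 ^ 2 + z 1 ^ 2)

/-- Euclidean inner product on ℝ². -/
noncomputable def dot2 (a b : Fin 2 → ℝ) : ℝ := a 0 * b 0 + a 1 * b 1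

/-- identity matrix entries -/
noncomputable def idm (i j : Fin 2) : ℝ := if i = j then 1 else 0

/-- J(z) = z zᵀ / |z|² -/
noncomputable def Jmat (z : Fin 2 → ℝ) (i j : Fin 2) : ℝ := z i * z j / nrm2 z ^ 2

/-- divergence of a planar vector field -/
noncomputable def divg (v : (Fin 2 → ℝ) → (Fin 2 → ℝ)) (x : Fin 2 → ℝ) : ℝ :=
  fderiv ℝ v x (Pi.single 0 1) 0 + fderiv ℝ v x (Pi.single 1 1) 1

/-- traction operator T on a planar vector field:
(Tv)(x) = λ (div v)(x) ν + 2μ ((ν·∇)v)(x) + μ (div(Qv))(x) Qν, where Q = [[0,1],[-1,0]]. -/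
noncomputable def traction (lam mu : ℝ) (ν : Fin 2 → ℝ)
    (v : (Fin 2 → ℝ) → (Fin 2 → ℝ)) (x : Fin 2 → ℝ) : Fin 2 → ℝ :=
  (lam * divg v x) • ν + (2 * mu) • fderiv ℝ v x ν
    + (mu * divg (fun y => ![v y 1, -(v y 0)]) x) • ![ν 1, -(ν 0)]

/-- traction of a 2×2 matrix-valued field, acting columnwise -/
noncomputable def tractionM (lam mu : ℝ) (ν : Fin 2 → ℝ)
    (G : (Fin 2 → ℝ) → Fin 2 → Fin 2 → ℝ) (x : Fin 2 → ℝ) (i j : Fin 2) : ℝ :=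
  traction lam mu ν (fun y i' => G y i' j) x i

/-- U₁(x,y) = λ ν (x−y)ᵀ + μ (x−y) νᵀ + μ (ν·(x−y)) I -/
noncomputable def U1mat (lam mu : ℝ) (ν x y : Fin 2 → ℝ) (i j : Fin 2) : ℝ :=
  lam * ν i * (x j - y j) + mu * (x i - y i) * ν j + mu * dot2 ν (x - y) * idm i j

/-- U₂(x,y) = (λ+2μ) ν (x−y)ᵀ + μ (x−y) νᵀ + μ (ν·(x−y)) (I − 4J(x−y)) -/
noncomputable def U2mat (lam mu : ℝ) (ν x y : Fin 2 → ℝ) (i j : Fin 2) : ℝ :=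
  (lam + 2 * mu) * ν i * (x j - y j) + mu * (x i - y i) * ν j
    + mu * dot2 ν (x - y) * (idm i j - 4 * Jmat (x - y) i j)

/-- Laguerre polynomial L_n(x) = ∑_{k=0}^n (−1)^k (n choose k) x^k / k! -/
noncomputable def lagPoly (n : ℕ) (x : ℝ) : ℝ :=
  ∑ k ∈ Finset.range (n + 1), (-1 : ℝ) ^ k * (n.choose k : ℝ) * x ^ k / (k.factorial : ℝ)

noncomputable def dlin (a : Fin 2 → ℝ) : (Fin 2 → ℝ) →L[ℝ] ℝ :=
  a 0 • ContinuousLinearMap.proj 0 + a 1 • ContinuousLinearMap.proj 1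


/-
Each column of `f(|z − y|) I` is a scalar field `g` times a constant vector `c = e_j`, and by the chain
rule `∇g(x) = (f'(r)/r) (x − y)` with `r = |x − y|`. For such a field the traction is
`λ (∇g·c) ν + 2μ (∇g·ν) c + μ (∇g·Qc) Qν`, and the planar identity
`(d·Qe_j) (Qν)_i = d_i ν_j − (ν·d) δ_ij` turns it into `(f'(r)/r) U₁(x, y)`.
-/

/-- `rotQ c = Q c` for the matrix `Q = [[0, 1], [-1, 0]]` of the traction operator. -/
def rotQ (c : Fin 2 → ℝ) : Fin 2 → ℝ := ![c 1, -(c 0)]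

noncomputable def dot2CLM (a : Fin 2 → ℝ) : (Fin 2 → ℝ) →L[ℝ] ℝ :=
  a 0 • ContinuousLinearMap.proj 0 + a 1 • ContinuousLinearMap.proj 1

@[simp]
lemma dot2CLM_apply (a h : Fin 2 → ℝ) : dot2CLM a h = dot2 a h := rfl

lemma dot2_self_eq_nrm2_sq (z : Fin 2 → ℝ) : dot2 z z = nrm2 z ^ 2 := by
  rw [nrm2, Real.sq_sqrt (by positivity), dot2]
  ring

lemma nrm2_pos {z : Fin 2 → ℝ} (hz : z ≠ 0) : 0 < nrm2 z := by
  rw [nrm2, Real.sqrt_pos]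
  by_contra! h
  have h0 : z 0 = 0 := pow_eq_zero_iff two_ne_zero |>.mp (by nlinarith [sq_nonneg (z 1)])
  have h1 : z 1 = 0 := pow_eq_zero_iff two_ne_zero |>.mp (by nlinarith [sq_nonneg (z 0)])
  exact hz (funext fun i => by fin_cases i <;> assumption)

lemma hasFDerivAt_dot2_self (z : Fin 2 → ℝ) :
    HasFDerivAt (fun w => dot2 w w) (2 • dot2CLM z) z := by
  have h0 := hasFDerivAt_apply (𝕜 := ℝ) (0 : Fin 2) z
  have h1 := hasFDerivAt_apply (𝕜 := ℝ) (1 : Fin 2) z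
  refine ((h0.mul h0).add (h1.mul h1)).congr_fderiv ?_
  ext h
  simp only [add_apply, smul_apply, ContinuousLinearMap.proj_apply, smul_eq_mul, dot2CLM_apply,
    dot2, nsmul_eq_mul]
  ring

lemma nrm2_eq_sqrt_dot2 (z : Fin 2 → ℝ) : nrm2 z = √(dot2 z z) := by
  simp only [nrm2, dot2, sq]

lemma hasFDerivAt_nrm2 {z : Fin 2 → ℝ} (hz : z ≠ 0) :
    HasFDerivAt nrm2 ((nrm2 z)⁻¹ • dot2CLM z) z := by
  have hpos := nrm2_pos hz
  have h := (hasFDerivAt_dot2_self z).sqrt (by rw [dot2_self_eq_nrm2_sq]; positivity)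
  rw [← funext nrm2_eq_sqrt_dot2, ← nrm2_eq_sqrt_dot2] at h
  refine h.congr_fderiv ?_
  ext v
  simp only [smul_apply, dot2CLM_apply, nsmul_eq_mul, Nat.cast_ofNat, smul_eq_mul]
  field_simp

lemma HasDerivAt.hasFDerivAt_radial {f f' : ℝ → ℝ} {x y : Fin 2 → ℝ} (hxy : x ≠ y)
    (hf : HasDerivAt f (f' (nrm2 (x - y))) (nrm2 (x - y))) :
    HasFDerivAt (fun z => f (nrm2 (z - y)))
      ((f' (nrm2 (x - y)) / nrm2 (x - y)) • dot2CLM (x - y)) x := by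
  have hnrm := (hasFDerivAt_nrm2 (sub_ne_zero.mpr hxy)).comp x (hasFDerivAt_sub_const (𝕜 := ℝ) y)
  refine (hf.comp_hasFDerivAt x hnrm).congr_fderiv ?_
  ext h
  simp only [ContinuousLinearMap.comp_id, smul_apply, dot2CLM_apply, smul_eq_mul]
  ring

section ScalarTimesConstant

variable {g : (Fin 2 → ℝ) → ℝ} {D : (Fin 2 → ℝ) →L[ℝ] ℝ} {x : Fin 2 → ℝ}

lemma divg_smul_const (hg : HasFDerivAt g D x) (c : Fin 2 → ℝ) :
    divg (fun z => g z • c) x = D c := by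
  have hc : c = c 0 • Pi.single 0 1 + c 1 • Pi.single 1 1 := by
    funext i; fin_cases i <;> simp
  rw [divg, (hg.smul_const c).fderiv]
  conv_rhs => rw [hc]
  simp only [ContinuousLinearMap.smulRight_apply, Pi.smul_apply, smul_eq_mul, map_add, map_smul]
  ring

lemma traction_smul_const (hg : HasFDerivAt g D x) (lam mu : ℝ) (ν c : Fin 2 → ℝ) :
    traction lam mu ν (fun z => g z • c) x
      = (lam * D c) • ν + (2 * mu * D ν) • c + (mu * D (rotQ c)) • rotQ ν := by
  have hrot : (fun z => ![(g z • c) 1, -((g z • c) 0)]) = fun z => g z • rotQ c := by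
    funext z i; fin_cases i <;> simp [rotQ]
  rw [traction, hrot, divg_smul_const hg, divg_smul_const hg, (hg.smul_const c).fderiv]
  simp [rotQ, mul_smul]

end ScalarTimesConstant

lemma dot2_comm (a b : Fin 2 → ℝ) : dot2 a b = dot2 b a := by
  simp only [dot2]; ring

lemma dot2_idm (d : Fin 2 → ℝ) (j : Fin 2) : dot2 d (fun i' => idm i' j) = d j := by
  fin_cases j <;> simp [dot2, idm]

lemma dot2_rotQ_mul_rotQ (d ν : Fin 2 → ℝ) (i j : Fin 2) :
    dot2 d (rotQ (fun i' => idm i' j)) * rotQ ν i = d i * ν j - dot2 ν d * idm i j := by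
  fin_cases i <;> fin_cases j <;> simp [dot2, rotQ, idm] <;> ring

/-- The traction of the matrix field z ↦ f(|z−y|) I equals (f'(|x−y|)/|x−y|) U₁(x,y). -/
theorem traction_radial_scalar_times_id (lam mu : ℝ) (ν : Fin 2 → ℝ) (f f' : ℝ → ℝ)
    (hf : ∀ r : ℝ, 0 < r → HasDerivAt f (f' r) r)
    (y x : Fin 2 → ℝ) (hxy : x ≠ y) :
    ∀ i j : Fin 2,
      tractionM lam mu ν (fun z i' j' => f (nrm2 (z - y)) * idm i' j') x i j
        = f' (nrm2 (x - y)) / nrm2 (x - y) * U1mat lam mu ν x y i j := by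
  intro i j
  set s := f' (nrm2 (x - y)) / nrm2 (x - y)
  have hg : HasFDerivAt (fun z => f (nrm2 (z - y))) (s • dot2CLM (x - y)) x :=
    (hf _ (nrm2_pos (sub_ne_zero.mpr hxy))).hasFDerivAt_radial hxy
  have hcol : (fun z i' => f (nrm2 (z - y)) * idm i' j)
      = fun z => f (nrm2 (z - y)) • fun i' => idm i' j := rfl
  rw [tractionM, hcol, traction_smul_const hg]
  have hQ := dot2_rotQ_mul_rotQ (x - y) ν i j
  simp only [Pi.add_apply, Pi.smul_apply, smul_eq_mul, smul_apply, dot2CLM_apply, dot2_idm,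
    U1mat, Pi.sub_apply] at hQ ⊢
  linear_combination s * mu * hQ + 2 * s * mu * idm i j * dot2_comm (x - y) ν
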